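/- arXiv:math/9911183 — 5 statements merged into one kernel-verified Lean document; each statement's English description precedes it below -/
import Mathlib

section
/- Let Q be a proximity matrix. Then: (a) S = −(1−Q)(1−Q)ᵀ is negative definite, i.e. for every nonzero x ∈ ℚⁿ one has xᵀ S x < 0; (b) s_{ii} = −1 − ∑_j q_{ij} for every i (the self-intersection of an exceptional curve is −1 minus the number of points proximate to its center); (c) if moreover Q satisfies the Enriques axioms (E3) and (E4), then for all i < j one has s_{ij} = q_{ij} − #{k : q_{ik} = q_{jk} = 1}, and s_{ij} ∈ {0,1} (two exceptional curves meet transversally in at most one point). -/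
/-!
`S = -N Nᵀ` with `N = 1 - Q` unitriangular, hence invertible, so `xᵀ S x = -‖Nᵀ x‖² < 0` for
`x ≠ 0`. Expanding the product, `s_{ij} = q_{ij} + q_{ji} - δ_{ij} - ∑_k q_{ik} q_{jk}`; for
`0/1` entries the sum counts the points proximate to both `q_i` and `q_j`. By (E4) there is at most
one such point, and by (E3) its existence forces `q_{ij} = 1`.
-/

open Matrix Finset

/-- A proximity matrix: strictly upper triangular with entries `0` or `1`. -/
def IsProxMat {n : ℕ} (Q : Matrix (Fin n) (Fin n) ℤ) : Prop :=
  (∀ i j : Fin n, ¬ i < j → Q i j = 0) ∧ (∀ i j : Fin n, Q i j = 0 ∨ Q i j = 1)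

/-- The intersection matrix `S = -(1-Q)(1-Q)ᵀ` of the exceptional curves. -/
def Smat {n : ℕ} (Q : Matrix (Fin n) (Fin n) ℤ) : Matrix (Fin n) (Fin n) ℤ :=
  -((1 - Q) * (1 - Q)ᵀ)

theorem Matrix.det_one_sub_eq_one_of_strictlyUpper {ι R : Type*} [Fintype ι] [LinearOrder ι]
    [DecidableEq ι] [CommRing R] {Q : Matrix ι ι R} (hQ : ∀ i j, ¬ i < j → Q i j = 0) :
    (1 - Q).det = 1 := by
  have htri : (1 - Q).IsUpperTriangular := fun i j (hji : j < i) => by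
    simp [one_apply_ne hji.ne', hQ i j hji.not_gt]
  rw [det_of_isUpperTriangular htri]
  exact Finset.prod_eq_one fun i _ => by simp [hQ i i (lt_irrefl i)]

theorem Smat_apply {n : ℕ} (Q : Matrix (Fin n) (Fin n) ℤ) (i j : Fin n) :
    Smat Q i j = Q i j + Q j i - (1 : Matrix (Fin n) (Fin n) ℤ) i j - ∑ k, Q i k * Q j k := by
  simp only [Smat, transpose_sub, transpose_one, mul_sub, mul_one, sub_mul, one_mul,
    Matrix.neg_apply, Matrix.sub_apply, one_apply, transpose_apply, mul_apply]
  ring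

theorem posDef_neg_Smat_map_intCast {n : ℕ} {Q : Matrix (Fin n) (Fin n) ℤ}
    (hQ : ∀ i j, ¬ i < j → Q i j = 0) : (-(Smat Q).map (Int.cast : ℤ → ℚ)).PosDef := by
  set A := (1 - Q).map (Int.cast : ℤ → ℚ)
  have hS : -(Smat Q).map (Int.cast : ℤ → ℚ) = A * Aᴴ := by
    ext i j
    simp [A, Smat, mul_apply, one_apply, eq_comm]
  have hdet : A.det = 1 := by
    rw [← Int.cast_det, det_one_sub_eq_one_of_strictlyUpper hQ, Int.cast_one]
  rw [hS]
  exact .mul_conjTranspose_self A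
    (vecMul_injective_iff_isUnit.2 (by simp [isUnit_iff_isUnit_det, hdet]))

theorem sum_mul_eq_card_filter {ι : Type*} [Fintype ι] {u v : ι → ℤ}
    (hu : ∀ k, u k = 0 ∨ u k = 1) (hv : ∀ k, v k = 0 ∨ v k = 1) :
    ∑ k, u k * v k = (#{k | u k = 1 ∧ v k = 1} : ℤ) := by
  rw [Finset.natCast_card_filter]
  refine Finset.sum_congr rfl fun k _ => ?_
  rcases hu k with h | h <;> rcases hv k with h' | h' <;> simp [h, h']

namespace IsProxMat

variable {n : ℕ} {Q : Matrix (Fin n) (Fin n) ℤ}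

theorem Smat_apply_self (hQ : IsProxMat Q) (i : Fin n) : Smat Q i i = -1 - ∑ j, Q i j := by
  have hsq : ∀ j, Q i j * Q i j = Q i j := fun j => by rcases hQ.2 i j with h | h <;> simp [h]
  simp [Smat_apply, hsq, hQ.1 i i (lt_irrefl i)]

theorem Smat_apply_of_lt (hQ : IsProxMat Q) {i j : Fin n} (hij : i < j) :
    Smat Q i j = Q i j - (#{k | Q i k = 1 ∧ Q j k = 1} : ℤ) := by
  rw [Smat_apply, hQ.1 j i hij.not_gt, one_apply_ne hij.ne,
    ← sum_mul_eq_card_filter (hQ.2 i) (hQ.2 j)]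
  ring

theorem Smat_apply_of_lt_eq_zero_or_one (hQ : IsProxMat Q) {i j : Fin n} (hij : i < j)
    (hE3 : ∀ k, Q i k = 1 → Q j k = 1 → Q i j = 1)
    (hE4 : ∀ k k', Q i k = 1 → Q j k = 1 → Q i k' = 1 → Q j k' = 1 → k = k') :
    Smat Q i j = 0 ∨ Smat Q i j = 1 := by
  rw [hQ.Smat_apply_of_lt hij]
  have hcard : #{k | Q i k = 1 ∧ Q j k = 1} ≤ 1 := Finset.card_le_one.2 fun k hk k' hk' => by
    simp only [mem_filter, mem_univ, true_and] at hk hk'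
    exact hE4 k k' hk.1 hk.2 hk'.1 hk'.2
  rcases Nat.le_one_iff_eq_zero_or_eq_one.1 hcard with h0 | h1
  · simpa [h0] using hQ.2 i j
  · obtain ⟨k, hk⟩ := Finset.card_pos.1 (h1.symm ▸ Nat.one_pos)
    simp only [mem_filter, mem_univ, true_and] at hk
    simp [h1, hE3 k hk.1 hk.2]

end IsProxMat

theorem proximity_intersection_matrix_props_general
    (n : ℕ) (Q : Matrix (Fin n) (Fin n) ℤ) (hQ : IsProxMat Q) :
    (∀ x : Fin n → ℚ, x ≠ 0 → x ⬝ᵥ ((Smat Q).map (Int.cast : ℤ → ℚ) *ᵥ x) < 0) ∧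
    (∀ i : Fin n, Smat Q i i = -1 - ∑ j, Q i j) ∧
    ((∀ i j k : Fin n, i < j → Q i k = 1 → Q j k = 1 → Q i j = 1) →
      (∀ i j : Fin n, i < j → ∀ k k' : Fin n,
        Q i k = 1 → Q j k = 1 → Q i k' = 1 → Q j k' = 1 → k = k') →
      ∀ i j : Fin n, i < j →
        Smat Q i j =
          Q i j - ((Finset.univ.filter fun k => Q i k = 1 ∧ Q j k = 1).card : ℤ) ∧
        (Smat Q i j = 0 ∨ Smat Q i j = 1)) := by
  refine ⟨fun x hx => ?_, hQ.Smat_apply_self, fun hE3 hE4 i j hij => ?_⟩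
  · simpa [neg_mulVec] using (posDef_neg_Smat_map_intCast hQ.1).dotProduct_mulVec_pos hx
  · exact ⟨hQ.Smat_apply_of_lt hij,
      hQ.Smat_apply_of_lt_eq_zero_or_one hij (hE3 i j · hij) (hE4 i j hij)⟩

/-- For a proximity matrix `Q` with `S = -(1-Q)(1-Q)ᵀ`:
(a) `S` is negative definite; (b) `s_{ii} = -1 - ∑_j q_{ij}`;
(c) under the Enriques axioms (E3) and (E4), for `i < j` one has
`s_{ij} = q_{ij} - #{k : q_{ik} = q_{jk} = 1}` and `s_{ij} ∈ {0, 1}`. -/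
theorem proximity_intersection_matrix_props
    (n : ℕ) (hn : 1 ≤ n) (Q : Matrix (Fin n) (Fin n) ℤ) (hQ : IsProxMat Q) :
    (∀ x : Fin n → ℚ, x ≠ 0 → x ⬝ᵥ ((Smat Q).map (Int.cast : ℤ → ℚ) *ᵥ x) < 0) ∧
    (∀ i : Fin n, Smat Q i i = -1 - ∑ j, Q i j) ∧
    ((∀ i j k : Fin n, i < j → Q i k = 1 → Q j k = 1 → Q i j = 1) →
      (∀ i j : Fin n, i < j → ∀ k k' : Fin n,
        Q i k = 1 → Q j k = 1 → Q i k' = 1 → Q j k' = 1 → k = k') →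
      ∀ i j : Fin n, i < j →
        Smat Q i j =
          Q i j - ((Finset.univ.filter fun k => Q i k = 1 ∧ Q j k = 1).card : ℤ) ∧
        (Smat Q i j = 0 ∨ Smat Q i j = 1)) :=
  proximity_intersection_matrix_props_general n Q hQ
end

section
/- Let Q be a proximity matrix satisfying the Enriques axioms (E1)–(E4) and let ε be a branch vector for Q, with T the associated intersection matrix and f the fiber vector. Then the set C = { z ∈ ℤⁿ : z_i ≥ 1 for all i and (T z)_k ≤ 0 for all k } contains f, is closed under taking componentwise minimum of two elements, and possesses a unique componentwise-least element (the fundamental cycle of the canonical resolution exists and is unique). -/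
/-!
For `i < j`, `s_{ij} = q_{ij} - #{k : q_{ik} = q_{jk} = 1}`; by (E4) rows `i` and `j` of `Q` have
a common `1` in at most one column, and by (E3) only if `q_{ij} = 1`. So `S`, and with it `T`, has
nonnegative off-diagonal entries. For such a matrix, lowering the other coordinates of `z` can
only lower `(T z)_k`, so the cycles `z ≥ 1` with `T z ≤ 0` are closed under componentwise
minimum. The fiber vector is one of them because `(2 - ε_j)(1 + ε_j) = 2` turns `T f` into a
multiple of a column of `S Mᵀ = -(1 - Q)`. A nonempty set of integer vectors bounded below and
closed under minimum has a least element: any element of least coordinate sum.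
-/

open Matrix Finset


/-- `M = N⁻¹ = 1 + Q + ⋯ + Q^(n-1)`. -/
def Mmat {n : ℕ} (Q : Matrix (Fin n) (Fin n) ℤ) : Matrix (Fin n) (Fin n) ℤ :=
  ∑ k ∈ Finset.range n, Q ^ k

/-- The Enriques axioms (E1)–(E4) for a proximity matrix. -/
def EnriquesAxioms {n : ℕ} (Q : Matrix (Fin n) (Fin n) ℤ) : Prop :=
  (∀ j : Fin n, 0 < j.val → ∃ i : Fin n, i < j ∧ Q i j = 1) ∧
  (∀ j : Fin n, (Finset.univ.filter fun i => Q i j = 1).card ≤ 2) ∧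
  (∀ i j k : Fin n, i < j → Q i k = 1 → Q j k = 1 → Q i j = 1) ∧
  (∀ i j : Fin n, i < j → ∀ k k' : Fin n,
    Q i k = 1 → Q j k = 1 → Q i k' = 1 → Q j k' = 1 → k = k')

/-- A branch vector for `Q`: each `ε i ∈ {0,1}`, and `s_{ij}` is even whenever
`ε_i = ε_j = 1`. -/
def IsBranchVec {n : ℕ} (Q : Matrix (Fin n) (Fin n) ℤ) (ε : Fin n → ℤ) : Prop :=
  (∀ i, ε i = 0 ∨ ε i = 1) ∧ ∀ i j, ε i = 1 → ε j = 1 → 2 ∣ Smat Q i j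

/-- The intersection matrix `T_{ij} = (2 - ε_i)(2 - ε_j) s_{ij} / 2` of the
exceptional curves `F_i` of the canonical resolution. -/
def Tmat {n : ℕ} (Q : Matrix (Fin n) (Fin n) ℤ) (ε : Fin n → ℤ) :
    Matrix (Fin n) (Fin n) ℤ :=
  fun i j => (2 - ε i) * (2 - ε j) * Smat Q i j / 2

/-- The fiber vector `f_i = (1 + ε_i) m_{1i}` (with first blown-up point `i0`). -/
def fiberVec {n : ℕ} (Q : Matrix (Fin n) (Fin n) ℤ) (ε : Fin n → ℤ) (i0 : Fin n) :
    Fin n → ℤ :=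
  fun i => (1 + ε i) * Mmat Q i0 i

/-- `z` is the fundamental cycle for the intersection matrix `T`: the
componentwise-least vector with `z_i ≥ 1` for all `i` and `(T z)_k ≤ 0` for all `k`. -/
def IsFundCycle {n : ℕ} (T : Matrix (Fin n) (Fin n) ℤ) (z : Fin n → ℤ) : Prop :=
  (∀ i, 1 ≤ z i) ∧ (∀ k, (T *ᵥ z) k ≤ 0) ∧
  ∀ w : Fin n → ℤ, (∀ i, 1 ≤ w i) → (∀ k, (T *ᵥ w) k ≤ 0) → z ≤ w

section LeastElement

variable {ι : Type*} [Fintype ι]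

theorem exists_isLeast_of_inf_mem {C : Set (ι → ℤ)} (hne : C.Nonempty) (hbdd : BddBelow C)
    (hinf : ∀ z ∈ C, ∀ w ∈ C, z ⊓ w ∈ C) : ∃ z, IsLeast C z := by
  classical
  obtain ⟨b, hb⟩ := hbdd
  obtain ⟨_, ⟨z, hz, rfl⟩, hmin⟩ :=
    Int.exists_least_of_bdd (P := fun s => ∃ z ∈ C, ∑ i, z i = s)
      ⟨∑ i, b i, by rintro _ ⟨z, hz, rfl⟩; exact sum_le_sum fun i _ => hb hz i⟩
      (hne.elim fun z hz => ⟨_, z, hz, rfl⟩)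
  refine ⟨z, hz, fun w hw i => ?_⟩
  have hle : ∀ i ∈ univ, (z ⊓ w) i ≤ z i := fun i _ => inf_le_left
  have hsum : ∑ i, (z ⊓ w) i = ∑ i, z i :=
    le_antisymm (sum_le_sum hle) (hmin _ ⟨_, hinf z hz w hw, rfl⟩)
  have hzi : (z ⊓ w) i = z i := (sum_eq_sum_iff_of_le hle).1 hsum i (mem_univ i)
  exact hzi ▸ inf_le_right

end LeastElement

section OffDiagNonneg

variable {ι R : Type*} [Fintype ι] [Semiring R]

theorem mulVec_apply_le_of_offDiag_nonneg [PartialOrder R] [IsOrderedRing R]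
    {T : Matrix ι ι R} (hT : ∀ i j, i ≠ j → 0 ≤ T i j) {z w : ι → R} (hzw : z ≤ w)
    {k : ι} (hk : z k = w k) : (T *ᵥ z) k ≤ (T *ᵥ w) k := by
  refine sum_le_sum fun j _ => ?_
  rcases eq_or_ne k j with rfl | hkj
  · rw [hk]
  · exact mul_le_mul_of_nonneg_left (hzw j) (hT k j hkj)

/-- With `T` the intersection matrix of curves `F_i`, `(T *ᵥ z) k` is the intersection number
`z · F_k` of the cycle `z = ∑ z_i F_i`. -/
def antinefCycles [Preorder R] (T : Matrix ι ι R) : Set (ι → R) :=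
  {z | (∀ i, 1 ≤ z i) ∧ ∀ k, (T *ᵥ z) k ≤ 0}

theorem inf_mem_antinefCycles [LinearOrder R] [IsOrderedRing R] {T : Matrix ι ι R}
    (hT : ∀ i j, i ≠ j → 0 ≤ T i j) {z w : ι → R} (hz : z ∈ antinefCycles T)
    (hw : w ∈ antinefCycles T) : z ⊓ w ∈ antinefCycles T := by
  refine ⟨fun i => le_inf (hz.1 i) (hw.1 i), fun k => ?_⟩
  rcases le_total (z k) (w k) with h | h
  · exact (mulVec_apply_le_of_offDiag_nonneg hT inf_le_left (inf_eq_left.2 h)).trans (hz.2 k)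
  · exact (mulVec_apply_le_of_offDiag_nonneg hT inf_le_right (inf_eq_right.2 h)).trans (hw.2 k)

end OffDiagNonneg

theorem Matrix.pow_apply_eq_zero_of_lt_add {R : Type*} [Semiring R] {n : ℕ}
    {Q : Matrix (Fin n) (Fin n) R} (hQ : ∀ i j, ¬ i < j → Q i j = 0) (k : ℕ) {i j : Fin n}
    (hij : j.val < i.val + k) : (Q ^ k) i j = 0 := by
  induction k generalizing j with
  | zero => exact one_apply_ne (by rintro rfl; omega)
  | succ k ih =>
    rw [pow_succ, mul_apply]
    refine sum_eq_zero fun l _ => ?_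
    by_cases hl : l.val < i.val + k
    · rw [ih hl, zero_mul]
    · rw [hQ l j (by rw [Fin.lt_def]; omega), mul_zero]

theorem Smat_eq {n : ℕ} (Q : Matrix (Fin n) (Fin n) ℤ) : Smat Q = Q + Qᵀ - 1 - Q * Qᵀ := by
  rw [Smat, transpose_sub, transpose_one, sub_mul, mul_sub, mul_sub, one_mul, mul_one, one_mul]
  abel

theorem Smat_transpose {n : ℕ} (Q : Matrix (Fin n) (Fin n) ℤ) : (Smat Q)ᵀ = Smat Q := by
  rw [Smat, transpose_neg, transpose_mul, transpose_transpose]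

namespace IsProxMat

variable {n : ℕ} {Q : Matrix (Fin n) (Fin n) ℤ}

theorem nonneg (hQ : IsProxMat Q) (i j : Fin n) : 0 ≤ Q i j := by
  rcases hQ.2 i j with h | h <;> omega

theorem pow_nonneg (hQ : IsProxMat Q) (k : ℕ) (i j : Fin n) : 0 ≤ (Q ^ k) i j := by
  induction k generalizing j with
  | zero => rw [pow_zero, one_apply]; split <;> omega
  | succ k ih =>
    rw [pow_succ, mul_apply]
    exact sum_nonneg fun l _ => mul_nonneg (ih l) (hQ.nonneg l j)

theorem pow_eq_zero (hQ : IsProxMat Q) : Q ^ n = 0 := by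
  ext i j
  exact pow_apply_eq_zero_of_lt_add hQ.1 n (by omega)

theorem Mmat_mul_one_sub (hQ : IsProxMat Q) : Mmat Q * (1 - Q) = 1 := by
  rw [Mmat, geom_sum_mul_neg, hQ.pow_eq_zero, sub_zero]

theorem Mmat_eq_one_add_mul (hQ : IsProxMat Q) : Mmat Q = 1 + Mmat Q * Q := by
  have h := hQ.Mmat_mul_one_sub
  rw [mul_sub, mul_one] at h
  rw [← h, sub_add_cancel]

theorem Mmat_nonneg (hQ : IsProxMat Q) (i j : Fin n) : 0 ≤ Mmat Q i j := by
  rw [Mmat, Matrix.sum_apply]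
  exact sum_nonneg fun k _ => hQ.pow_nonneg k i j

theorem one_le_Mmat_zero (hQ : IsProxMat Q) (hE : EnriquesAxioms Q) (hn : 1 ≤ n) (i : Fin n) :
    1 ≤ Mmat Q ⟨0, hn⟩ i := by
  induction i using WellFoundedLT.induction with
  | _ i ih =>
  have hM : Mmat Q ⟨0, hn⟩ i =
      (1 : Matrix (Fin n) (Fin n) ℤ) ⟨0, hn⟩ i + ∑ l, Mmat Q ⟨0, hn⟩ l * Q l i := by
    exact congr_fun (congr_fun hQ.Mmat_eq_one_add_mul ⟨0, hn⟩) i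
  have hterm_nonneg : ∀ l ∈ univ, 0 ≤ Mmat Q ⟨0, hn⟩ l * Q l i :=
    fun l _ => mul_nonneg (hQ.Mmat_nonneg _ _) (hQ.nonneg _ _)
  rcases Nat.eq_zero_or_pos i.val with h0 | hpos
  · obtain rfl : i = ⟨0, hn⟩ := Fin.ext h0
    rw [hM, one_apply_eq]
    linarith [sum_nonneg hterm_nonneg]
  · obtain ⟨p, hp, hQp⟩ := hE.1 i hpos
    have hterm := single_le_sum hterm_nonneg (mem_univ p)
    rw [hQp, mul_one] at hterm
    rw [hM, one_apply_ne (Fin.ne_of_val_ne (by simp; omega))]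
    linarith [ih p hp]

theorem Smat_mul_Mmat_transpose (hQ : IsProxMat Q) : Smat Q * (Mmat Q)ᵀ = -(1 - Q) := by
  rw [Smat, neg_mul, Matrix.mul_assoc, ← transpose_mul, hQ.Mmat_mul_one_sub, transpose_one,
    mul_one]

theorem mul_transpose_apply_le (hQ : IsProxMat Q) (hE : EnriquesAxioms Q) {i j : Fin n}
    (hij : i < j) : (Q * Qᵀ) i j ≤ Q i j := by
  simp only [mul_apply, transpose_apply]
  by_cases h : ∃ k, Q i k = 1 ∧ Q j k = 1
  · obtain ⟨k, hik, hjk⟩ := h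
    have hunique : ∀ k', k' ≠ k → Q i k' * Q j k' = 0 := by
      intro k' hk'
      rcases hQ.2 i k' with h | h
      · rw [h, zero_mul]
      rcases hQ.2 j k' with h' | h'
      · rw [h', mul_zero]
      exact absurd (hE.2.2.2 i j hij k' k h h' hik hjk) hk'
    rw [sum_eq_single k (fun k' _ => hunique k') (by simp), hik, hjk, mul_one,
      hE.2.2.1 i j k hij hik hjk]
  · refine (sum_nonpos fun k _ => ?_).trans (hQ.nonneg i j)
    rcases hQ.2 i k with hik | hik
    · rw [hik, zero_mul]
    rcases hQ.2 j k with hjk | hjk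
    · rw [hjk, mul_zero]
    exact absurd ⟨k, hik, hjk⟩ h

theorem Smat_offDiag_nonneg (hQ : IsProxMat Q) (hE : EnriquesAxioms Q) {i j : Fin n}
    (hij : i ≠ j) : 0 ≤ Smat Q i j := by
  wlog hlt : i < j generalizing i j
  · rw [← Smat_transpose, transpose_apply]
    exact this hij.symm (lt_of_le_of_ne (not_lt.1 hlt) hij.symm)
  have hji : Q j i = 0 := hQ.1 j i (lt_asymm hlt)
  have hsum := hQ.mul_transpose_apply_le hE hlt
  simp only [Smat_eq, Matrix.sub_apply, Matrix.add_apply, transpose_apply, one_apply_ne hij]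
  linarith

end IsProxMat

namespace IsBranchVec

variable {n : ℕ} {Q : Matrix (Fin n) (Fin n) ℤ} {ε : Fin n → ℤ}

theorem two_sub_nonneg (hε : IsBranchVec Q ε) (i : Fin n) : 0 ≤ 2 - ε i := by
  rcases hε.1 i with h | h <;> omega

theorem one_le_one_add (hε : IsBranchVec Q ε) (i : Fin n) : 1 ≤ 1 + ε i := by
  rcases hε.1 i with h | h <;> omega

theorem two_sub_mul_one_add (hε : IsBranchVec Q ε) (i : Fin n) : (2 - ε i) * (1 + ε i) = 2 := by
  rcases hε.1 i with h | h <;> rw [h] <;> norm_num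

theorem two_mul_Tmat (hε : IsBranchVec Q ε) (i j : Fin n) :
    2 * Tmat Q ε i j = (2 - ε i) * (2 - ε j) * Smat Q i j := by
  refine Int.mul_ediv_cancel' ?_
  rcases hε.1 i with hi | hi
  · rw [hi]; exact ⟨(2 - ε j) * Smat Q i j, by ring⟩
  rcases hε.1 j with hj | hj
  · rw [hj]; exact ⟨(2 - ε i) * Smat Q i j, by ring⟩
  obtain ⟨c, hc⟩ := hε.2 i j hi hj
  exact ⟨(2 - ε i) * (2 - ε j) * c, by rw [hc]; ring⟩

theorem Tmat_offDiag_nonneg (hε : IsBranchVec Q ε) (hQ : IsProxMat Q) (hE : EnriquesAxioms Q)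
    {i j : Fin n} (hij : i ≠ j) : 0 ≤ Tmat Q ε i j := by
  have h := mul_nonneg (mul_nonneg (hε.two_sub_nonneg i) (hε.two_sub_nonneg j))
    (hQ.Smat_offDiag_nonneg hE hij)
  rw [← hε.two_mul_Tmat] at h
  omega

theorem Tmat_mulVec_fiberVec (hε : IsBranchVec Q ε) (hQ : IsProxMat Q) (i0 k : Fin n) :
    (Tmat Q ε *ᵥ fiberVec Q ε i0) k = -(2 - ε k) * (1 - Q) k i0 := by
  have hS : ∑ j, Smat Q k j * Mmat Q i0 j = -(1 - Q) k i0 := by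
    simpa only [mul_apply, transpose_apply, Matrix.neg_apply] using
      congr_fun (congr_fun hQ.Smat_mul_Mmat_transpose k) i0
  refine mul_left_cancel₀ (two_ne_zero (α := ℤ)) ?_
  calc 2 * (Tmat Q ε *ᵥ fiberVec Q ε i0) k
      = ∑ j, 2 * (2 - ε k) * (Smat Q k j * Mmat Q i0 j) := by
        rw [mulVec, dotProduct, mul_sum]
        refine sum_congr rfl fun j _ => ?_
        rw [fiberVec, ← mul_assoc, hε.two_mul_Tmat]
        linear_combination (2 - ε k) * Smat Q k j * Mmat Q i0 j * hε.two_sub_mul_one_add j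
    _ = 2 * (-(2 - ε k) * (1 - Q) k i0) := by rw [← mul_sum, hS]; ring

theorem fiberVec_mem_antinefCycles (hε : IsBranchVec Q ε) (hQ : IsProxMat Q)
    (hE : EnriquesAxioms Q) (hn : 1 ≤ n) :
    fiberVec Q ε ⟨0, hn⟩ ∈ antinefCycles (Tmat Q ε) := by
  refine ⟨fun i => one_le_mul_of_one_le_of_one_le (hε.one_le_one_add i)
    (hQ.one_le_Mmat_zero hE hn i), fun k => ?_⟩
  have hQk : Q k ⟨0, hn⟩ = 0 := hQ.1 _ _ (by simp [Fin.lt_def])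
  rw [hε.Tmat_mulVec_fiberVec hQ, Matrix.sub_apply, hQk, sub_zero, neg_mul]
  exact neg_nonpos.2 (mul_nonneg (hε.two_sub_nonneg k) (by rw [one_apply]; split <;> omega))

end IsBranchVec

/-- For a proximity matrix satisfying the Enriques axioms and a
branch vector `ε`, the set `C = {z : z_i ≥ 1 ∀i, (Tz)_k ≤ 0 ∀k}` contains the
fiber vector, is closed under componentwise minimum, and has a unique
componentwise-least element (existence and uniqueness of the fundamental cycle). -/
theorem fundamental_cycle_exists_unique
    (n : ℕ) (hn : 1 ≤ n) (Q : Matrix (Fin n) (Fin n) ℤ)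
    (hQ : IsProxMat Q) (hE : EnriquesAxioms Q)
    (ε : Fin n → ℤ) (hε : IsBranchVec Q ε) :
    fiberVec Q ε ⟨0, hn⟩ ∈
      {z : Fin n → ℤ | (∀ i, 1 ≤ z i) ∧ ∀ k, (Tmat Q ε *ᵥ z) k ≤ 0} ∧
    (∀ z₁ ∈ {z : Fin n → ℤ | (∀ i, 1 ≤ z i) ∧ ∀ k, (Tmat Q ε *ᵥ z) k ≤ 0},
      ∀ z₂ ∈ {z : Fin n → ℤ | (∀ i, 1 ≤ z i) ∧ ∀ k, (Tmat Q ε *ᵥ z) k ≤ 0},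
        (fun i => min (z₁ i) (z₂ i)) ∈
          {z : Fin n → ℤ | (∀ i, 1 ≤ z i) ∧ ∀ k, (Tmat Q ε *ᵥ z) k ≤ 0}) ∧
    (∃! z : Fin n → ℤ,
      z ∈ {z : Fin n → ℤ | (∀ i, 1 ≤ z i) ∧ ∀ k, (Tmat Q ε *ᵥ z) k ≤ 0} ∧
      ∀ w ∈ {z : Fin n → ℤ | (∀ i, 1 ≤ z i) ∧ ∀ k, (Tmat Q ε *ᵥ z) k ≤ 0}, z ≤ w) := by
  have hf := hε.fiberVec_mem_antinefCycles hQ hE hn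
  have hinf : ∀ z ∈ antinefCycles (Tmat Q ε), ∀ w ∈ antinefCycles (Tmat Q ε),
      z ⊓ w ∈ antinefCycles (Tmat Q ε) :=
    fun _ hz _ hw => inf_mem_antinefCycles (fun _ _ => hε.Tmat_offDiag_nonneg hQ hE) hz hw
  obtain ⟨z, hz⟩ := exists_isLeast_of_inf_mem ⟨_, hf⟩ ⟨1, fun z hz => hz.1⟩ hinf
  exact ⟨hf, hinf, z, hz, fun w hw => IsLeast.unique hw hz⟩
end

section
/- Let Q be a proximity matrix satisfying the Enriques axioms (E1)–(E4) and ε a branch vector for Q; let z be the fundamental cycle for T. Suppose ε_k = 1 and s_{kk} = −2, so that T_{kk} = −1 (F_k is a (−1)-curve), and define the matrix T̄, indexed by the indices i, j ≠ k, by T̄_{ij} = T_{ij} + T_{ik} T_{jk} (the intersection matrix of the exceptional curves of the resolution obtained by contracting F_k). Then the restriction of z to the indices i ≠ k is the componentwise-least vector z̄, indexed by i ≠ k, with z̄_i ≥ 1 for all i ≠ k and (T̄ z̄)_j ≤ 0 for all j ≠ k. (The fundamental cycle of the minimal resolution is ∑_{i ≠ k} z_i F̄_i.) -/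
/-!
Since `T_kk = -1`, contracting `F_k` gives, for every `v`, the identity
`(T̄ v|_{≠k})_j = (T v)_j + T_jk (T v)_k`, and the off-diagonal entries of `T` are
nonnegative by the Enriques axioms; hence the restriction of the fundamental cycle is
anti-nef for `T̄`. Conversely, a cycle `w ≥ 1` that is anti-nef for `T̄` extends to one for
`T` by giving it the value `max 1 (F_k · w)` at `k`, so the minimality of `z` bounds its
restriction by `w`.
-/

open Matrix Finset

section Intersection

variable {n : ℕ} {Q : Matrix (Fin n) (Fin n) ℤ}

lemma Smat_isSymm (Q : Matrix (Fin n) (Fin n) ℤ) : (Smat Q).IsSymm :=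
  (isSymm_mul_transpose_self _).neg

lemma Smat_apply_of_ne {i j : Fin n} (hij : i ≠ j) :
    Smat Q i j = Q i j + Q j i - ∑ l, Q i l * Q j l := by
  simp only [Smat, transpose_sub, transpose_one, mul_sub, mul_one, sub_mul, one_mul,
    Matrix.neg_apply, Matrix.sub_apply, one_apply, hij, ↓reduceIte, zero_sub, transpose_apply,
    mul_apply, neg_sub, sub_neg_eq_add]
  ring

lemma IsProxMat.mul_eq_zero_of_not_and (hQ : IsProxMat Q) {i j l : Fin n}
    (h : ¬(Q i l = 1 ∧ Q j l = 1)) : Q i l * Q j l = 0 := by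
  rcases hQ.2 i l with h1 | h1 <;> rcases hQ.2 j l with h2 | h2 <;> simp_all

-- By (E4) at most one term of the sum is nonzero, and by (E3) such a term forces `Q i j = 1`.
lemma sum_mul_le_of_lt (hQ : IsProxMat Q) (hE : EnriquesAxioms Q) {i j : Fin n} (hij : i < j) :
    ∑ l, Q i l * Q j l ≤ Q i j := by
  by_cases h : ∃ l₀, Q i l₀ = 1 ∧ Q j l₀ = 1
  · obtain ⟨l₀, hi, hj⟩ := h
    rw [Finset.sum_eq_single l₀ (fun l _ hl => hQ.mul_eq_zero_of_not_and fun ⟨h1, h2⟩ =>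
      hl (hE.2.2.2 i j hij l l₀ h1 h2 hi hj)) (by simp), hi, hj, hE.2.2.1 i j l₀ hij hi hj]
    norm_num
  · rw [Finset.sum_eq_zero fun l _ => hQ.mul_eq_zero_of_not_and fun hl => h ⟨l, hl⟩]
    rcases hQ.2 i j with h | h <;> simp [h]

lemma Smat_nonneg_of_ne (hQ : IsProxMat Q) (hE : EnriquesAxioms Q) {i j : Fin n}
    (hij : i ≠ j) : 0 ≤ Smat Q i j := by
  wlog hlt : i < j generalizing i j
  · rw [← (Smat_isSymm Q).apply]
    exact this hij.symm (hij.symm.lt_of_le (not_lt.1 hlt))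
  rw [Smat_apply_of_ne hij, hQ.1 j i hlt.not_gt]
  linarith [sum_mul_le_of_lt hQ hE hlt]

lemma Tmat_isSymm (Q : Matrix (Fin n) (Fin n) ℤ) (ε : Fin n → ℤ) : (Tmat Q ε).IsSymm :=
  IsSymm.ext fun i j => by
    simp only [Tmat, (Smat_isSymm Q).apply]
    ring_nf

lemma Tmat_nonneg_of_ne (hQ : IsProxMat Q) (hE : EnriquesAxioms Q) {ε : Fin n → ℤ}
    (hε : ∀ i, ε i ≤ 2) {i j : Fin n} (hij : i ≠ j) : 0 ≤ Tmat Q ε i j :=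
  Int.ediv_nonneg (mul_nonneg (mul_nonneg (by linarith [hε i]) (by linarith [hε j]))
    (Smat_nonneg_of_ne hQ hE hij)) (by norm_num)

end Intersection

section Contraction

variable {ι : Type*} [Fintype ι] [DecidableEq ι] {T : Matrix ι ι ℤ} {k : ι}

def contractAt (T : Matrix ι ι ℤ) (k : ι) : Matrix {i // i ≠ k} {i // i ≠ k} ℤ :=
  fun i j => T i j + T i k * T j k

lemma contractAt_mulVec_restrict (hT : T.IsSymm) (hkk : T k k = -1) (v : ι → ℤ)
    (j : {i // i ≠ k}) :
    (contractAt T k *ᵥ fun i => v i) j = (T *ᵥ v) j + T j k * (T *ᵥ v) k := by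
  simp only [mulVec, dotProduct, contractAt, Fintype.sum_eq_add_sum_subtype_ne _ k,
    hkk, hT.apply, add_mul, Finset.sum_add_distrib, mul_assoc, ← Finset.mul_sum]
  ring

variable (hT : T.IsSymm) (hkk : T k k = -1) (hTk : ∀ i, i ≠ k → 0 ≤ T i k)
include hT hkk hTk

lemma contractAt_mulVec_restrict_nonpos {v : ι → ℤ} (hv : ∀ m, (T *ᵥ v) m ≤ 0)
    (j : {i // i ≠ k}) : (contractAt T k *ᵥ fun i => v i) j ≤ 0 := by
  rw [contractAt_mulVec_restrict hT hkk]
  exact add_nonpos (hv j) (mul_nonpos_of_nonneg_of_nonpos (hTk j j.2) (hv k))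

lemma exists_extend_of_contractAt_mulVec_nonpos {w : {i // i ≠ k} → ℤ}
    (hw1 : ∀ i, 1 ≤ w i) (hw2 : ∀ j, (contractAt T k *ᵥ w) j ≤ 0) :
    ∃ W : ι → ℤ, (∀ i, 1 ≤ W i) ∧ (∀ m, (T *ᵥ W) m ≤ 0) ∧ (fun i : {i // i ≠ k} => W i) = w := by
  set c := ∑ i : {i // i ≠ k}, T k i * w i
  have hterm_nonneg (i : {i // i ≠ k}) : 0 ≤ T k i * w i := by
    rw [hT.apply]; exact mul_nonneg (hTk i i.2) (by linarith [hw1 i])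
  have hcol (j : {i // i ≠ k}) : T j k * (max 1 c - c) = 0 := by
    rcases le_or_gt 1 c with hc | hc
    · rw [max_eq_right hc, sub_self, mul_zero]
    · have hc0 : c = 0 := le_antisymm (by omega) (Finset.sum_nonneg fun i _ => hterm_nonneg i)
      have hj := (Finset.sum_eq_zero_iff_of_nonneg fun i _ => hterm_nonneg i).1 hc0 j
        (Finset.mem_univ j)
      rw [← hT.apply, (mul_eq_zero.1 hj).resolve_right (by linarith [hw1 j]), zero_mul]
  let W : ι → ℤ := fun i => if h : i = k then max 1 c else w ⟨i, h⟩
  have hres : (fun i : {i // i ≠ k} => W i) = w := funext fun i => dif_neg i.2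
  have hWk : (T *ᵥ W) k = c - max 1 c := by
    have hne (i : {i // i ≠ k}) : (i : ι) ≠ k := i.2
    simp only [mulVec, dotProduct, mul_dite, Fintype.sum_eq_add_sum_subtype_ne _ k,
      ↓reduceDIte, hkk, neg_mul, one_mul, hne, Subtype.coe_eta, W, c]
    ring
  refine ⟨W, fun i => ?_, fun m => ?_, hres⟩
  · by_cases h : i = k
    · simp [W, h]
    · simp [W, h, hw1]
  · by_cases hm : m = k
    · rw [hm, hWk]; linarith [le_max_right 1 c]
    · have h := contractAt_mulVec_restrict hT hkk W ⟨m, hm⟩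
      rw [hres] at h
      have hWm : (T *ᵥ W) m = (contractAt T k *ᵥ w) ⟨m, hm⟩ := by
        linear_combination -h - T m k * hWk + hcol ⟨m, hm⟩
      exact hWm ▸ hw2 ⟨m, hm⟩

lemma restrict_le_of_contractAt_mulVec_nonpos {z : ι → ℤ}
    (hz : ∀ W : ι → ℤ, (∀ i, 1 ≤ W i) → (∀ m, (T *ᵥ W) m ≤ 0) → z ≤ W)
    {w : {i // i ≠ k} → ℤ} (hw1 : ∀ i, 1 ≤ w i) (hw2 : ∀ j, (contractAt T k *ᵥ w) j ≤ 0) :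
    (fun i : {i // i ≠ k} => z i) ≤ w := by
  obtain ⟨W, hW1, hW2, rfl⟩ := exists_extend_of_contractAt_mulVec_nonpos hT hkk hTk hw1 hw2
  exact fun i => hz W hW1 hW2 i

end Contraction

theorem fundamental_cycle_of_minimal_resolution_general
    (n : ℕ) (Q : Matrix (Fin n) (Fin n) ℤ)
    (hQ : IsProxMat Q) (hE : EnriquesAxioms Q)
    (ε : Fin n → ℤ) (hε : IsBranchVec Q ε)
    (z : Fin n → ℤ) (hz : IsFundCycle (Tmat Q ε) z)
    (k : Fin n) (hk1 : ε k = 1) (hk2 : Smat Q k k = -2) :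
    (∀ i : {i : Fin n // i ≠ k}, 1 ≤ z i.val) ∧
    (∀ j : {i : Fin n // i ≠ k},
      ((fun (i j : {i : Fin n // i ≠ k}) =>
          Tmat Q ε i.val j.val + Tmat Q ε i.val k * Tmat Q ε j.val k : Matrix _ _ ℤ) *ᵥ
        (fun i : {i : Fin n // i ≠ k} => z i.val)) j ≤ 0) ∧
    (∀ w : {i : Fin n // i ≠ k} → ℤ, (∀ i, 1 ≤ w i) →
      (∀ j : {i : Fin n // i ≠ k},
        ((fun (i j : {i : Fin n // i ≠ k}) =>
            Tmat Q ε i.val j.val + Tmat Q ε i.val k * Tmat Q ε j.val k : Matrix _ _ ℤ) *ᵥ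
          w) j ≤ 0) →
      (fun i : {i : Fin n // i ≠ k} => z i.val) ≤ w) := by
  have hT := Tmat_isSymm Q ε
  have hkk : Tmat Q ε k k = -1 := by simp [Tmat, hk1, hk2]
  have hTk : ∀ i, i ≠ k → 0 ≤ Tmat Q ε i k := fun i hi =>
    Tmat_nonneg_of_ne hQ hE (fun i => by rcases hε.1 i with h | h <;> omega) hi
  exact ⟨fun i => hz.1 i, contractAt_mulVec_restrict_nonpos hT hkk hTk hz.2.1,
    fun w hw1 hw2 => restrict_le_of_contractAt_mulVec_nonpos hT hkk hTk hz.2.2 hw1 hw2⟩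

/-- If `ε_k = 1` and `s_{kk} = -2` (so `T_{kk} = -1` and `F_k` is a
`(-1)`-curve), let `T̄_{ij} = T_{ij} + T_{ik} T_{jk}` for `i, j ≠ k` be the
intersection matrix after contracting `F_k`.  Then the restriction of the
fundamental cycle `z` to the indices `i ≠ k` is the fundamental cycle for `T̄`,
i.e. the componentwise-least vector `z̄` with `z̄_i ≥ 1` and `(T̄ z̄)_j ≤ 0`. -/
theorem fundamental_cycle_of_minimal_resolution
    (n : ℕ) (hn : 1 ≤ n) (Q : Matrix (Fin n) (Fin n) ℤ)
    (hQ : IsProxMat Q) (hE : EnriquesAxioms Q)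
    (ε : Fin n → ℤ) (hε : IsBranchVec Q ε)
    (z : Fin n → ℤ) (hz : IsFundCycle (Tmat Q ε) z)
    (k : Fin n) (hk1 : ε k = 1) (hk2 : Smat Q k k = -2) :
    (∀ i : {i : Fin n // i ≠ k}, 1 ≤ z i.val) ∧
    (∀ j : {i : Fin n // i ≠ k},
      ((fun (i j : {i : Fin n // i ≠ k}) =>
          Tmat Q ε i.val j.val + Tmat Q ε i.val k * Tmat Q ε j.val k : Matrix _ _ ℤ) *ᵥ
        (fun i : {i : Fin n // i ≠ k} => z i.val)) j ≤ 0) ∧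
    (∀ w : {i : Fin n // i ≠ k} → ℤ, (∀ i, 1 ≤ w i) →
      (∀ j : {i : Fin n // i ≠ k},
        ((fun (i j : {i : Fin n // i ≠ k}) =>
            Tmat Q ε i.val j.val + Tmat Q ε i.val k * Tmat Q ε j.val k : Matrix _ _ ℤ) *ᵥ
          w) j ≤ 0) →
      (fun i : {i : Fin n // i ≠ k} => z i.val) ≤ w) :=
  fundamental_cycle_of_minimal_resolution_general n Q hQ hE ε hε z hz k hk1 hk2
end

section
/- Let Q be a proximity matrix and ε a branch vector for Q, with T the associated intersection matrix. Then: (a) for every j, T_{jj} = −1 if and only if ε_j = 1 and s_{jj} = −2; (b) if ε_j = 0 then T_{jj} ≤ −2; (c) if T_{ii} = T_{jj} = −1 with i ≠ j, then T_{ij} = 0. (An exceptional curve F_j of the canonical resolution is a (−1)-curve exactly when it lies over a branched exceptional curve of self-intersection −2, and the (−1)-curves in the exceptional fiber are pairwise disjoint.) -/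
open Matrix Finset

/-!
Expanding `S = -(1 - Q)(1 - Q)ᵀ` gives `s_jj = -(1 + r_j)` with `r_j = ∑ₖ q_jk ≥ 0`, and
`s_ij = q_ij + q_ji - ∑ₖ q_ik q_jk ∈ [-r_i, 1]` for `i ≠ j`.
Where `ε_j = 0` the diagonal entry is `T_jj = 2 s_jj ≤ -2`; where `ε_i = ε_j = 1` we have
`T_ij = s_ij / 2` with `s_ij` even. So `T_jj = -1` forces `ε_j = 1` and `r_j = 1`, and two such
indices have `s_ij ∈ [-1, 1]` even, hence zero.
-/

lemma smat_eq {n : ℕ} (Q : Matrix (Fin n) (Fin n) ℤ) : Smat Q = Q + Qᵀ - Q * Qᵀ - 1 := by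
  simp only [Smat, transpose_sub, transpose_one, sub_mul, mul_sub, one_mul, mul_one]
  abel

lemma smat_apply_of_ne {n : ℕ} (Q : Matrix (Fin n) (Fin n) ℤ) {i j : Fin n} (hij : i ≠ j) :
    Smat Q i j = Q i j + Q j i - ∑ k, Q i k * Q j k := by
  simp [smat_eq, mul_apply, one_apply_ne hij]

namespace IsProxMat

variable {n : ℕ} {Q : Matrix (Fin n) (Fin n) ℤ}

lemma apply_self (hQ : IsProxMat Q) (i : Fin n) : Q i i = 0 :=
  hQ.1 i i (lt_irrefl i)

lemma mul_self_apply (hQ : IsProxMat Q) (i j : Fin n) : Q i j * Q i j = Q i j := by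
  rcases hQ.2 i j with h | h <;> simp [h]

lemma rowSum_nonneg (hQ : IsProxMat Q) (i : Fin n) : 0 ≤ ∑ k, Q i k :=
  sum_nonneg fun k _ => by rcases hQ.2 i k with h | h <;> simp [h]

lemma add_transpose_apply_le_one (hQ : IsProxMat Q) (i j : Fin n) : Q i j + Q j i ≤ 1 := by
  rcases lt_trichotomy i j with h | rfl | h
  · rw [hQ.1 j i h.not_gt]; rcases hQ.2 i j with h' | h' <;> omega
  · rw [hQ.apply_self]; omega
  · rw [hQ.1 i j h.not_gt]; rcases hQ.2 j i with h' | h' <;> omega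

lemma smat_apply_self (hQ : IsProxMat Q) (j : Fin n) : Smat Q j j = -(1 + ∑ k, Q j k) := by
  simp only [smat_eq, Matrix.sub_apply, Matrix.add_apply, transpose_apply, mul_apply, one_apply_eq,
    hQ.apply_self, hQ.mul_self_apply]
  ring

lemma smat_apply_self_le (hQ : IsProxMat Q) (j : Fin n) : Smat Q j j ≤ -1 := by
  linarith [hQ.smat_apply_self j, hQ.rowSum_nonneg j]

lemma smat_apply_mem_Icc (hQ : IsProxMat Q) {i j : Fin n} (hij : i ≠ j) :
    Smat Q i j ∈ Set.Icc (-∑ k, Q i k) 1 := by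
  have hprod_nonneg : ∀ k, 0 ≤ Q i k * Q j k := fun k => by
    rcases hQ.2 i k with h | h <;> rcases hQ.2 j k with h' | h' <;> simp [h, h']
  have hprod_le : ∀ k, Q i k * Q j k ≤ Q i k := fun k => by
    rcases hQ.2 i k with h | h <;> rcases hQ.2 j k with h' | h' <;> simp [h, h']
  have hsum_le : ∑ k, Q i k * Q j k ≤ ∑ k, Q i k := sum_le_sum fun k _ => hprod_le k
  have hsum_nonneg : 0 ≤ ∑ k, Q i k * Q j k := sum_nonneg fun k _ => hprod_nonneg k
  have hpair_nonneg : 0 ≤ Q i j + Q j i := by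
    rcases hQ.2 i j with h | h <;> rcases hQ.2 j i with h' | h' <;> omega
  rw [smat_apply_of_ne Q hij]
  constructor <;> linarith [hQ.add_transpose_apply_le_one i j]

end IsProxMat

section Tmat

variable {n : ℕ} (Q : Matrix (Fin n) (Fin n) ℤ) {ε : Fin n → ℤ}

lemma tmat_apply_self_of_eq_zero {j : Fin n} (hj : ε j = 0) : Tmat Q ε j j = 2 * Smat Q j j := by
  rw [Tmat, hj]
  omega

lemma tmat_apply_of_eq_one {i j : Fin n} (hi : ε i = 1) (hj : ε j = 1) :
    Tmat Q ε i j = Smat Q i j / 2 := by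
  rw [Tmat, hi, hj]
  norm_num

end Tmat

theorem minus_one_curves_of_canonical_resolution_general
    (n : ℕ) (Q : Matrix (Fin n) (Fin n) ℤ)
    (hQ : IsProxMat Q) (ε : Fin n → ℤ) (hε : IsBranchVec Q ε) :
    (∀ j : Fin n, Tmat Q ε j j = -1 ↔ (ε j = 1 ∧ Smat Q j j = -2)) ∧
    (∀ j : Fin n, ε j = 0 → Tmat Q ε j j ≤ -2) ∧
    (∀ i j : Fin n, i ≠ j → Tmat Q ε i i = -1 → Tmat Q ε j j = -1 →
      Tmat Q ε i j = 0) := by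
  have part_b : ∀ j, ε j = 0 → Tmat Q ε j j ≤ -2 := fun j hj => by
    rw [tmat_apply_self_of_eq_zero Q hj]
    linarith [hQ.smat_apply_self_le j]
  have part_a : ∀ j, Tmat Q ε j j = -1 ↔ ε j = 1 ∧ Smat Q j j = -2 := fun j => by
    rcases hε.1 j with hj | hj
    · have := part_b j hj
      constructor <;> intro h <;> omega
    · rw [tmat_apply_of_eq_one Q hj hj]
      have := hε.2 j j hj hj
      omega
  refine ⟨part_a, part_b, fun i j hij hi hj => ?_⟩
  obtain ⟨hεi, hsi⟩ := (part_a i).1 hi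
  obtain ⟨hεj, -⟩ := (part_a j).1 hj
  have hrow : ∑ k, Q i k = 1 := by linarith [hQ.smat_apply_self i]
  obtain ⟨hlo, hhi⟩ := hQ.smat_apply_mem_Icc hij
  have heven := hε.2 i j hεi hεj
  rw [tmat_apply_of_eq_one Q hεi hεj]
  omega

/-- For the intersection matrix `T` of the exceptional curves of
the canonical resolution: (a) `T_{jj} = -1` iff `ε_j = 1` and `s_{jj} = -2`;
(b) if `ε_j = 0` then `T_{jj} ≤ -2`; (c) two `(-1)`-curves are disjoint:
if `T_{ii} = T_{jj} = -1` with `i ≠ j` then `T_{ij} = 0`. -/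
theorem minus_one_curves_of_canonical_resolution
    (n : ℕ) (hn : 1 ≤ n) (Q : Matrix (Fin n) (Fin n) ℤ)
    (hQ : IsProxMat Q) (ε : Fin n → ℤ) (hε : IsBranchVec Q ε) :
    (∀ j : Fin n, Tmat Q ε j j = -1 ↔ (ε j = 1 ∧ Smat Q j j = -2)) ∧
    (∀ j : Fin n, ε j = 0 → Tmat Q ε j j ≤ -2) ∧
    (∀ i j : Fin n, i ≠ j → Tmat Q ε i i = -1 → Tmat Q ε j j = -1 →
      Tmat Q ε i j = 0) :=
  minus_one_curves_of_canonical_resolution_general n Q hQ ε hε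
end

section
/- Let Q be a proximity matrix (n×n, strictly upper triangular, entries 0 or 1) and let α̃ ∈ ℤⁿ be arbitrary. Set β̃ = α̃ M, γ̃ = α̃ Nᵀ, and ε_i = β̃_i mod 2 ∈ {0,1}. Then for every i with ε_i = 0, the integer γ_i := γ̃_i + ∑_{j ≠ i} ε_j s_{ij} is even. (The branch curve B of the canonical resolution meets every unbranched exceptional curve E_i in a divisor of even degree γ_i = B·E_i.) -/
open Matrix Finset

/-- A multiplicity vector for `Q`: nonnegative entries satisfying the proximity
inequalities `α̃_i ≥ ∑_j q_{ij} α̃_j`. -/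
def IsMultVec {n : ℕ} (Q : Matrix (Fin n) (Fin n) ℤ) (a : Fin n → ℤ) : Prop :=
  (∀ i, 0 ≤ a i) ∧ ∀ i, (∑ j, Q i j * a j) ≤ a i

/-- `β̃ = α̃ M`: multiplicities of the total transform of the branch curve. -/
def betaVec {n : ℕ} (Q : Matrix (Fin n) (Fin n) ℤ) (a : Fin n → ℤ) : Fin n → ℤ :=
  a ᵥ* Mmat Q

/-- `γ̃ = α̃ Nᵀ`: intersection degrees of the proper transform of the branch curve
with the exceptional curves. -/
def gammaVec {n : ℕ} (Q : Matrix (Fin n) (Fin n) ℤ) (a : Fin n → ℤ) : Fin n → ℤ :=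
  a ᵥ* (1 - Q)ᵀ

/-- `ε_i = β̃_i mod 2`: the branchedness of the `i`-th exceptional curve. -/
def epsVec {n : ℕ} (Q : Matrix (Fin n) (Fin n) ℤ) (a : Fin n → ℤ) : Fin n → ℤ :=
  fun i => betaVec Q a i % 2

/-- `μ = α̃ + ε Q`: the multiplicities of the total branch curves at the blown-up
points. -/
def muVec {n : ℕ} (Q : Matrix (Fin n) (Fin n) ℤ) (a : Fin n → ℤ) : Fin n → ℤ :=
  fun i => a i + (epsVec Q a ᵥ* Q) i

/-- `α = μ - ε`. -/
def alphaVec {n : ℕ} (Q : Matrix (Fin n) (Fin n) ℤ) (a : Fin n → ℤ) : Fin n → ℤ :=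
  fun i => muVec Q a i - epsVec Q a i

/-- The terminal conditions of the canonical resolution: `γ̃_i = 0` whenever
`ε_i = 1`; `s_{ij} = 0` whenever `i ≠ j` and `ε_i = ε_j = 1`; and `μ_i ≥ 2`. -/
def TerminalConds {n : ℕ} (Q : Matrix (Fin n) (Fin n) ℤ) (a : Fin n → ℤ) : Prop :=
  (∀ i, epsVec Q a i = 1 → gammaVec Q a i = 0) ∧
  (∀ i j, i ≠ j → epsVec Q a i = 1 → epsVec Q a j = 1 → Smat Q i j = 0) ∧
  (∀ i, 2 ≤ muVec Q a i)

/-!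
Since `M N = 1`, the vector `β̃` satisfies `β̃ N = α̃`, hence `γ̃ = β̃ N Nᵀ = -S β̃`
(`S` being symmetric). When `ε_i = 0` the correction term is the full sum `(S ε)_i`,
so `γ_i = (S (ε - β̃))_i`, and `ε - β̃` is even entrywise.
-/

theorem pow_apply_eq_zero_of_strictUpperTriangular {R : Type*} [Semiring R] {n : ℕ}
    {Q : Matrix (Fin n) (Fin n) R} (hQ : ∀ i j, ¬ i < j → Q i j = 0) :
    ∀ (k : ℕ) (i j : Fin n), (j : ℕ) < i + k → (Q ^ k) i j = 0
  | 0, i, j, h => one_apply_ne (Fin.ne_of_gt h)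
  | k + 1, i, j, h => by
    rw [pow_succ', mul_apply]
    refine sum_eq_zero fun l _ => ?_
    rcases lt_or_ge i l with hil | hli
    · rw [pow_apply_eq_zero_of_strictUpperTriangular hQ k l j (by omega), mul_zero]
    · rw [hQ i l (not_lt.mpr hli), zero_mul]

theorem pow_card_eq_zero_of_strictUpperTriangular {R : Type*} [Semiring R] {n : ℕ}
    {Q : Matrix (Fin n) (Fin n) R} (hQ : ∀ i j, ¬ i < j → Q i j = 0) : Q ^ n = 0 := by
  ext i j
  exact pow_apply_eq_zero_of_strictUpperTriangular hQ n i j (by omega)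

theorem Mmat_mul_one_sub {n : ℕ} {Q : Matrix (Fin n) (Fin n) ℤ} (hQ : IsProxMat Q) :
    Mmat Q * (1 - Q) = 1 := by
  rw [Mmat, geom_sum_mul_neg, pow_card_eq_zero_of_strictUpperTriangular hQ.1, sub_zero]

theorem gammaVec_eq_neg_Smat_mulVec_betaVec {n : ℕ} {Q : Matrix (Fin n) (Fin n) ℤ}
    (hQ : IsProxMat Q) (a : Fin n → ℤ) : gammaVec Q a = -(Smat Q *ᵥ betaVec Q a) := by
  have hbeta : betaVec Q a ᵥ* (1 - Q) = a := by
    rw [betaVec, vecMul_vecMul, Mmat_mul_one_sub hQ, vecMul_one]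
  rw [← vecMul_transpose, Smat_transpose, Smat, vecMul_neg, neg_neg, ← vecMul_vecMul, hbeta,
    gammaVec]

theorem two_dvd_epsVec_sub_betaVec {n : ℕ} (Q : Matrix (Fin n) (Fin n) ℤ) (a : Fin n → ℤ)
    (j : Fin n) : 2 ∣ epsVec Q a j - betaVec Q a j := by
  rw [epsVec, Int.emod_def]
  exact ⟨-(betaVec Q a j / 2), by ring⟩

theorem branch_degree_on_unbranched_curve_even_general
    (n : ℕ) (Q : Matrix (Fin n) (Fin n) ℤ)
    (hQ : IsProxMat Q) (a : Fin n → ℤ) :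
    ∀ i : Fin n, epsVec Q a i = 0 →
      Even (gammaVec Q a i +
        ∑ j ∈ Finset.univ.filter (fun j : Fin n => j ≠ i), epsVec Q a j * Smat Q i j) := by
  intro i hi
  have hfull : ∑ j ∈ univ.filter (· ≠ i), epsVec Q a j * Smat Q i j
      = (Smat Q *ᵥ epsVec Q a) i := by
    rw [mulVec, dotProduct, sum_filter_of_ne]
    · simp only [mul_comm]
    · rintro j - hj rfl
      rw [hi, zero_mul] at hj
      exact hj rfl
  rw [hfull, gammaVec_eq_neg_Smat_mulVec_betaVec hQ, Pi.neg_apply, neg_add_eq_sub,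
    ← Pi.sub_apply, ← mulVec_sub, even_iff_two_dvd, mulVec, dotProduct]
  exact dvd_sum fun j _ => (two_dvd_epsVec_sub_betaVec Q a j).mul_left _

/-- For an arbitrary vector `α̃`, with `β̃ = α̃ M`, `γ̃ = α̃ Nᵀ` and
`ε_i = β̃_i mod 2`: for every `i` with `ε_i = 0`, the integer
`γ_i = γ̃_i + ∑_{j ≠ i} ε_j s_{ij}` is even (the branch curve of the canonical
resolution meets every unbranched exceptional curve in even degree). -/
theorem branch_degree_on_unbranched_curve_even
    (n : ℕ) (hn : 1 ≤ n) (Q : Matrix (Fin n) (Fin n) ℤ)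
    (hQ : IsProxMat Q) (a : Fin n → ℤ) :
    ∀ i : Fin n, epsVec Q a i = 0 →
      Even (gammaVec Q a i +
        ∑ j ∈ Finset.univ.filter (fun j : Fin n => j ≠ i), epsVec Q a j * Smat Q i j) :=
  branch_degree_on_unbranched_curve_even_general n Q hQ a
end
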